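/- arXiv:1710.02849 — 10 statements merged into one kernel-verified Lean document; each statement's English description precedes it below -/
import Mathlib

section
/- For all θ in [0, 1/2], 4θ(1-θ) ≤ -θ log₂ θ - (1-θ) log₂(1-θ) ≤ 2√(θ(1-θ)). (The binary entropy function lies between the square of the Bhattacharyya-type function and the function itself.) -/
/-!
In nats the claim reads `4 log 2 · θ(1-θ) ≤ H(θ) ≤ 2 log 2 · √(θ(1-θ))`, and by the symmetry
`θ ↦ 1 - θ` it suffices to treat `θ ≤ 1/2`. Each bound is the nonnegativity of a gap function
vanishing at both ends of an interval whose derivative is convex and vanishes at the right end: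
for the lower bound `H(θ) - 4 log 2 · θ(1-θ)` on `[0, 1/2]`, for the upper bound the same
comparison after the substitution `θ = u²/(1+u²)`, which turns `√(θ(1-θ))` into `u/(1+u²)`.
Such a derivative changes sign at most once, from `+` to `-`, so the gap is unimodal.
-/

open Real Set

lemma nonneg_on_Icc_of_convexOn_deriv {f f' : ℝ → ℝ} {a b x : ℝ}
    (hf : ContinuousOn f (Icc a b)) (hf' : ∀ y ∈ Ioo a b, HasDerivAt f (f' y) y)
    (hconv : ConvexOn ℝ (Ioc a b) f') (hf'b : f' b = 0) (ha : 0 ≤ f a) (hb : 0 ≤ f b)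
    (hx : x ∈ Icc a b) : 0 ≤ f x := by
  -- Once `f' c ≤ 0`, convexity and `f' b = 0` keep `f' ≤ 0` on `[c, b]`.
  by_cases h : ∃ c ∈ Ioo a x, f' c ≤ 0
  · obtain ⟨c, hc, hf'c⟩ := h
    have hcb : c < b := hc.2.trans_le hx.2
    have hanti : AntitoneOn f (Icc x b) := by
      refine antitoneOn_of_hasDerivWithinAt_nonpos (f' := f') (convex_Icc x b)
        (hf.mono (Icc_subset_Icc_left hx.1)) (fun y hy => ?_) (fun y hy => ?_) <;>
        rw [interior_Icc] at hy
      · exact (hf' y ⟨hc.1.trans (hc.2.trans hy.1), hy.2⟩).hasDerivWithinAt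
      · calc f' y ≤ max (f' c) (f' b) :=
              hconv.le_max_of_mem_Icc ⟨hc.1, hcb.le⟩ ⟨hc.1.trans hcb, le_rfl⟩
                ⟨(hc.2.trans hy.1).le, hy.2.le⟩
          _ ≤ 0 := by rw [hf'b]; exact max_le hf'c le_rfl
    exact hb.trans (hanti ⟨le_rfl, hx.2⟩ ⟨hx.2, le_rfl⟩ hx.2)
  · push Not at h
    have hmono : MonotoneOn f (Icc a x) := by
      refine monotoneOn_of_hasDerivWithinAt_nonneg (f' := f') (convex_Icc a x)
        (hf.mono (Icc_subset_Icc_right hx.2)) (fun y hy => ?_) (fun y hy => ?_) <;>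
        rw [interior_Icc] at hy
      · exact (hf' y ⟨hy.1, hy.2.trans_le hx.2⟩).hasDerivWithinAt
      · exact (h y hy).le
    exact ha.trans (hmono ⟨le_rfl, hx.1⟩ ⟨hx.1, le_rfl⟩ hx.1)

noncomputable def lowerGap (θ : ℝ) : ℝ := binEntropy θ - 4 * log 2 * (θ * (1 - θ))

noncomputable def lowerGapDeriv (θ : ℝ) : ℝ := log (1 - θ) - log θ - 4 * log 2 * (1 - 2 * θ)

lemma hasDerivAt_lowerGap {θ : ℝ} (h₀ : θ ≠ 0) (h₁ : θ ≠ 1) :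
    HasDerivAt lowerGap (lowerGapDeriv θ) θ := by
  have hquad := ((hasDerivAt_id' θ).mul ((hasDerivAt_id' θ).const_sub 1)).const_mul (4 * log 2)
  refine ((hasDerivAt_binEntropy h₀ h₁).sub hquad).congr_deriv ?_
  rw [lowerGapDeriv]; ring

lemma hasDerivAt_lowerGapDeriv {θ : ℝ} (h₀ : θ ≠ 0) (h₁ : θ ≠ 1) :
    HasDerivAt lowerGapDeriv (8 * log 2 - θ⁻¹ - (1 - θ)⁻¹) θ := by
  have hlog := ((hasDerivAt_id' θ).const_sub 1).log (sub_ne_zero.2 h₁.symm)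
  have hlin := (((hasDerivAt_id' θ).const_mul 2).const_sub 1).const_mul (4 * log 2)
  refine ((hlog.sub ((hasDerivAt_id' θ).log h₀)).sub hlin).congr_deriv ?_
  ring

lemma convexOn_lowerGapDeriv : ConvexOn ℝ (Ioc 0 (1 / 2)) lowerGapDeriv := by
  refine convexOn_of_hasDerivWithinAt2_nonneg (f' := fun θ => 8 * log 2 - θ⁻¹ - (1 - θ)⁻¹)
    (f'' := fun θ => (θ ^ 2)⁻¹ - ((1 - θ) ^ 2)⁻¹)
    (convex_Ioc 0 (1 / 2)) (fun θ hθ => ?_) (fun θ hθ => ?_) (fun θ hθ => ?_) (fun θ hθ => ?_)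
  · exact (hasDerivAt_lowerGapDeriv hθ.1.ne' (by linarith [hθ.2])).continuousAt
      |>.continuousWithinAt
  · rw [interior_Ioc] at hθ
    exact (hasDerivAt_lowerGapDeriv hθ.1.ne' (by linarith [hθ.2])).hasDerivWithinAt
  · rw [interior_Ioc] at hθ
    have hinv := ((hasDerivAt_id' θ).const_sub 1).inv (by linarith [hθ.2] : 1 - θ ≠ 0)
    have hrecip := (hasDerivAt_inv hθ.1.ne').const_sub (8 * log 2)
    exact ((hrecip.sub hinv).congr_deriv (by ring)).hasDerivWithinAt
  · rw [interior_Ioc] at hθ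
    have : θ ^ 2 ≤ (1 - θ) ^ 2 := by nlinarith [hθ.1, hθ.2]
    simp only [sub_nonneg]
    exact inv_anti₀ (pow_pos hθ.1 2) this

lemma four_mul_log_two_mul_le_binEntropy {θ : ℝ} (hθ : θ ∈ Icc 0 1) :
    4 * log 2 * (θ * (1 - θ)) ≤ binEntropy θ := by
  wlog hhalf : θ ≤ 1 / 2 generalizing θ
  · have := this (θ := 1 - θ) ⟨by linarith [hθ.2], by linarith [hθ.1]⟩ (by linarith)
    rwa [binEntropy_one_sub, sub_sub_cancel, mul_comm (1 - θ)] at this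
  have hcont : Continuous lowerGap := by unfold lowerGap; fun_prop
  have := nonneg_on_Icc_of_convexOn_deriv hcont.continuousOn
    (fun y hy => hasDerivAt_lowerGap hy.1.ne' (by linarith [hy.2])) convexOn_lowerGapDeriv
    (by norm_num [lowerGapDeriv]) (by norm_num [lowerGap])
    (by rw [lowerGap, one_div, binEntropy_two_inv]; ring_nf; rfl) ⟨hθ.1, hhalf⟩
  rwa [lowerGap, sub_nonneg] at this

/-- `(1 + u²) (2 log 2 · √(θ(1-θ)) - H(θ))` at `θ = u²/(1+u²)`, by `one_add_sq_mul_binEntropy`. -/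
noncomputable def upperGap (u : ℝ) : ℝ :=
  2 * log 2 * u + u ^ 2 * log (u ^ 2) - (1 + u ^ 2) * log (1 + u ^ 2)

noncomputable def upperGapDeriv (u : ℝ) : ℝ :=
  2 * log 2 + 2 * u * log (u ^ 2) - 2 * u * log (1 + u ^ 2)

lemma continuous_upperGap : Continuous upperGap := by
  have h₁ := continuous_mul_log.comp (continuous_pow 2)
  have h₂ := continuous_mul_log.comp (continuous_const.add (continuous_pow 2) :
    Continuous fun u : ℝ => 1 + u ^ 2)
  unfold upperGap
  fun_prop

lemma hasDerivAt_upperGap {u : ℝ} (hu : u ≠ 0) : HasDerivAt upperGap (upperGapDeriv u) u := by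
  have h₁ := (hasDerivAt_mul_log (pow_ne_zero 2 hu)).comp (h := fun y => y ^ 2) u
    (hasDerivAt_pow 2 u)
  have h₂ := (hasDerivAt_mul_log (by positivity)).comp (h := fun y => 1 + y ^ 2) u
    ((hasDerivAt_pow 2 u).const_add 1)
  refine ((((hasDerivAt_id' u).const_mul (2 * log 2)).add h₁).sub h₂).congr_deriv ?_
  rw [upperGapDeriv]; norm_num; ring

lemma hasDerivAt_upperGapDeriv {u : ℝ} (hu : u ≠ 0) :
    HasDerivAt upperGapDeriv (2 * log (u ^ 2) - 2 * log (1 + u ^ 2) + 4 / (1 + u ^ 2)) u := by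
  have hsq := hasDerivAt_pow 2 u
  have h₁ := ((hasDerivAt_id' u).const_mul 2).mul (hsq.log (pow_ne_zero 2 hu))
  have h₂ := ((hasDerivAt_id' u).const_mul 2).mul ((hsq.const_add 1).log (by positivity))
  refine ((h₁.const_add (2 * log 2)).sub h₂).congr_deriv ?_
  field_simp; ring

lemma convexOn_upperGapDeriv : ConvexOn ℝ (Ioc 0 1) upperGapDeriv := by
  refine convexOn_of_hasDerivWithinAt2_nonneg
    (f' := fun u => 2 * log (u ^ 2) - 2 * log (1 + u ^ 2) + 4 / (1 + u ^ 2))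
    (f'' := fun u => 4 * (1 - u ^ 2) / (u * (1 + u ^ 2) ^ 2))
    (convex_Ioc 0 1) (fun u hu => ?_) (fun u hu => ?_) (fun u hu => ?_) (fun u hu => ?_)
  · exact (hasDerivAt_upperGapDeriv hu.1.ne').continuousAt.continuousWithinAt
  · rw [interior_Ioc] at hu
    exact (hasDerivAt_upperGapDeriv hu.1.ne').hasDerivWithinAt
  · rw [interior_Ioc] at hu
    have hu₀ := hu.1.ne'
    have hsq := hasDerivAt_pow 2 u
    have h₁ := (hsq.log (pow_ne_zero 2 hu₀)).const_mul 2
    have h₂ := ((hsq.const_add 1).log (by positivity)).const_mul 2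
    have h₃ := (hasDerivAt_const u (4 : ℝ)).div (hsq.const_add 1) (by positivity)
    refine (((h₁.sub h₂).add h₃).congr_deriv ?_).hasDerivWithinAt
    field_simp; ring
  · rw [interior_Ioc] at hu
    have hu₀ := hu.1
    exact div_nonneg (by nlinarith [hu.2]) (by positivity)

lemma one_add_sq_mul_binEntropy (u : ℝ) :
    (1 + u ^ 2) * binEntropy (u ^ 2 / (1 + u ^ 2)) =
      (1 + u ^ 2) * log (1 + u ^ 2) - u ^ 2 * log (u ^ 2) := by
  rcases eq_or_ne u 0 with rfl | hu
  · simp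
  have hpos : 0 < 1 + u ^ 2 := by positivity
  have hcompl : 1 - u ^ 2 / (1 + u ^ 2) = (1 + u ^ 2)⁻¹ := by field_simp; ring
  rw [binEntropy, hcompl, inv_inv, inv_div, log_div hpos.ne' (pow_ne_zero 2 hu)]
  field_simp
  ring

lemma exists_eq_sq_div_one_add_sq {θ : ℝ} (hθ : θ ∈ Icc 0 (1 / 2)) :
    ∃ u ∈ Icc (0 : ℝ) 1, θ = u ^ 2 / (1 + u ^ 2) := by
  have h₁ : 0 < 1 - θ := by linarith [hθ.2]
  have hq : 0 ≤ θ / (1 - θ) := div_nonneg hθ.1 h₁.le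
  refine ⟨√(θ / (1 - θ)), ⟨sqrt_nonneg _, sqrt_le_one.2 ?_⟩, ?_⟩
  · rw [div_le_one h₁]; linarith [hθ.2]
  · rw [sq_sqrt hq]; field_simp; ring

lemma binEntropy_le_two_mul_log_two_mul_sqrt {θ : ℝ} (hθ : θ ∈ Icc 0 1) :
    binEntropy θ ≤ 2 * log 2 * √(θ * (1 - θ)) := by
  wlog hhalf : θ ≤ 1 / 2 generalizing θ
  · have := this (θ := 1 - θ) ⟨by linarith [hθ.2], by linarith [hθ.1]⟩ (by linarith)
    rwa [binEntropy_one_sub, sub_sub_cancel, mul_comm (1 - θ)] at this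
  obtain ⟨u, hu, rfl⟩ := exists_eq_sq_div_one_add_sq ⟨hθ.1, hhalf⟩
  have hgap := nonneg_on_Icc_of_convexOn_deriv continuous_upperGap.continuousOn
    (fun y hy => hasDerivAt_upperGap hy.1.ne') convexOn_upperGapDeriv
    (by norm_num [upperGapDeriv]) (by norm_num [upperGap]) (by norm_num [upperGap]) hu
  have hpos : 0 < 1 + u ^ 2 := by positivity
  have hsqrt : √(u ^ 2 / (1 + u ^ 2) * (1 - u ^ 2 / (1 + u ^ 2))) = u / (1 + u ^ 2) := by
    rw [← sqrt_sq (div_nonneg hu.1 hpos.le)]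
    congr 1
    field_simp
    ring
  rw [hsqrt, ← mul_le_mul_iff_of_pos_left hpos, one_add_sq_mul_binEntropy]
  rw [upperGap] at hgap
  field_simp
  linarith

theorem entropy_between_bhattacharyya_sq_and_itself :
    ∀ θ ∈ Set.Icc (0:ℝ) (1/2),
      4 * θ * (1 - θ) ≤ -θ * Real.logb 2 θ - (1 - θ) * Real.logb 2 (1 - θ) ∧
      -θ * Real.logb 2 θ - (1 - θ) * Real.logb 2 (1 - θ) ≤ 2 * Real.sqrt (θ * (1 - θ)) := by
  intro θ hθ
  have hθ' : θ ∈ Icc 0 1 := ⟨hθ.1, hθ.2.trans (by norm_num)⟩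
  have hbits : -θ * logb 2 θ - (1 - θ) * logb 2 (1 - θ) = binEntropy θ / log 2 := by
    simp only [logb, binEntropy, log_inv]; ring
  have hlog2 : 0 < log 2 := log_pos one_lt_two
  rw [hbits, le_div_iff₀ hlog2, div_le_iff₀ hlog2]
  constructor
  · linarith [four_mul_log_two_mul_le_binEntropy hθ']
  · linarith [binEntropy_le_two_mul_log_two_mul_sqrt hθ']
end

section
/- Let U be a binary random variable and Q a finite-alphabet random variable with joint pmf P. Define the Bhattacharyya parameter Z(U|Q) = 2 Σ_q √(P(0,q) P(1,q)) and the conditional entropy H(U|Q) in bits. Then Z(U|Q)² ≤ H(U|Q) ≤ Z(U|Q). -/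
/-!
Writing `a = P 0 q`, `b = P 1 q` and `p = a / (a + b)`, the `q`-summand of `H(U|Q)` is
`(a + b) h(p)` with `h` the binary entropy in bits (Mathlib's `binEntropy` is in nats, whence the
factors `log 2`), while that of `Z(U|Q)` is `2 √(ab) = (a + b) · 2 √(p(1-p))`. Everything rests on
`4p(1-p) ≤ h(p) ≤ 2 √(p(1-p))`: the right inequality is summed directly, and the left one
turns Cauchy–Schwarz `(∑ 2√(ab))² ≤ (∑ (a + b)) (∑ 4ab/(a + b))` into `Z² ≤ H`.

Both bounds on `h` are equalities at `p = 1/2` and symmetric under `p ↦ 1 - p`, so they follow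
from the monotonicity of `p(1-p) / h(p)` and of `h(p)² / (p(1-p))` on `(0, 1/2]`. After expanding
`h`, the signs of the two derivatives are those of `p² log p - (1-p)² log(1-p)` and of
`(1-p) log(1-p) - p log p`, and both are nonnegative by two applications of `log x ≤ x - 1`.
-/

open Finset Real Set

theorem monotoneOn_div_of_hasDerivAt {f g f' g' : ℝ → ℝ} {D : Set ℝ} (hD : Convex ℝ D)
    (hf : ∀ x ∈ D, HasDerivAt f (f' x) x) (hg : ∀ x ∈ D, HasDerivAt g (g' x) x)
    (hg₀ : ∀ x ∈ D, g x ≠ 0) (h : ∀ x ∈ interior D, f x * g' x ≤ f' x * g x) :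
    MonotoneOn (fun x ↦ f x / g x) D := by
  refine monotoneOn_of_hasDerivWithinAt_nonneg
    (f' := fun x ↦ (f' x * g x - f x * g' x) / g x ^ 2) hD
    (fun x hx ↦ ((hf x hx).continuousAt.div (hg x hx).continuousAt (hg₀ x hx)).continuousWithinAt)
    (fun x hx ↦ ?_) fun x hx ↦ div_nonneg (sub_nonneg.2 (h x hx)) (sq_nonneg _)
  have hx := interior_subset hx
  exact ((hf x hx).div (hg x hx) (hg₀ x hx)).hasDerivWithinAt

theorem mul_log_le_one_sub_mul_log {p : ℝ} (hp₀ : 0 < p) (hp : p ≤ 2⁻¹) :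
    p * log p ≤ (1 - p) * log (1 - p) := by
  have hq : 0 < 1 - p := by linarith
  have hlog_one_sub : -(p / (1 - p)) ≤ log (1 - p) := by
    have := one_sub_inv_le_log_of_pos hq
    rwa [show 1 - (1 - p)⁻¹ = -(p / (1 - p)) by field_simp; ring] at this
  have hlog_div : (1 - 2 * p) / (1 - p) ≤ log (1 - p) - log p := by
    have := one_sub_inv_le_log_of_pos (div_pos hq hp₀)
    rwa [log_div hq.ne' hp₀.ne', show 1 - ((1 - p) / p)⁻¹ = (1 - 2 * p) / (1 - p) by
      field_simp; ring] at this
  calc p * log p = p * log (1 - p) - p * (log (1 - p) - log p) := by ring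
    _ ≤ p * log (1 - p) - p * ((1 - 2 * p) / (1 - p)) := by gcongr
    _ = p * log (1 - p) + (1 - 2 * p) * -(p / (1 - p)) := by ring
    _ ≤ p * log (1 - p) + (1 - 2 * p) * log (1 - p) := by gcongr; linarith
    _ = (1 - p) * log (1 - p) := by ring

theorem one_sub_sq_mul_log_le_sq_mul_log {p : ℝ} (hp₀ : 0 < p) (hp : p ≤ 2⁻¹) :
    (1 - p) ^ 2 * log (1 - p) ≤ p ^ 2 * log p := by
  have hq : 0 < 1 - p := by linarith
  have hlog_one_sub : log (1 - p) ≤ -p := by linarith [log_le_sub_one_of_pos hq]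
  have hlog_div : p * (log (1 - p) - log p) ≤ 1 - 2 * p := by
    have := log_le_sub_one_of_pos (div_pos hq hp₀)
    rw [log_div hq.ne' hp₀.ne'] at this
    calc p * (log (1 - p) - log p) ≤ p * ((1 - p) / p - 1) := by gcongr
      _ = 1 - 2 * p := by field_simp; ring
  calc (1 - p) ^ 2 * log (1 - p) = p ^ 2 * log (1 - p) + (1 - 2 * p) * log (1 - p) := by ring
    _ ≤ p ^ 2 * log (1 - p) + (1 - 2 * p) * -p := by gcongr; linarith
    _ ≤ p ^ 2 * log (1 - p) - p * (p * (log (1 - p) - log p)) := by nlinarith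
    _ = p ^ 2 * log p := by ring

theorem hasDerivAt_mul_one_sub (x : ℝ) : HasDerivAt (fun p ↦ p * (1 - p)) (1 - 2 * x) x :=
  ((hasDerivAt_id' x).mul ((hasDerivAt_id' x).const_sub 1)).congr_deriv (by ring)

theorem binEntropy_eq_neg_mul_log_sub_mul_log (p : ℝ) :
    binEntropy p = -(p * log p) - (1 - p) * log (1 - p) := by
  simp only [binEntropy, log_inv]; ring

theorem monotoneOn_mul_one_sub_div_binEntropy :
    MonotoneOn (fun p ↦ p * (1 - p) / binEntropy p) (Ioc 0 2⁻¹) := by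
  refine monotoneOn_div_of_hasDerivAt (convex_Ioc _ _) (f' := fun p ↦ 1 - 2 * p)
    (fun p _ ↦ hasDerivAt_mul_one_sub p)
    (fun p hp ↦ hasDerivAt_binEntropy hp.1.ne' (by linarith [hp.2]))
    (fun p hp ↦ (binEntropy_pos hp.1 (by linarith [hp.2])).ne') fun p hp ↦ ?_
  rw [interior_Ioc] at hp
  rw [binEntropy_eq_neg_mul_log_sub_mul_log]
  linear_combination one_sub_sq_mul_log_le_sq_mul_log hp.1 hp.2.le

theorem monotoneOn_binEntropy_sq_div_mul_one_sub :
    MonotoneOn (fun p ↦ binEntropy p ^ 2 / (p * (1 - p))) (Ioc 0 2⁻¹) := by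
  refine monotoneOn_div_of_hasDerivAt (convex_Ioc _ _) (g' := fun p ↦ 1 - 2 * p)
    (fun p hp ↦ (hasDerivAt_binEntropy hp.1.ne' (by linarith [hp.2])).pow 2)
    (fun p _ ↦ hasDerivAt_mul_one_sub p)
    (fun p hp ↦ (mul_pos hp.1 (by linarith [hp.2])).ne') fun p hp ↦ ?_
  rw [interior_Ioc] at hp
  have hsign : binEntropy p * (1 - 2 * p) ≤ 2 * (log (1 - p) - log p) * (p * (1 - p)) := by
    rw [binEntropy_eq_neg_mul_log_sub_mul_log]
    linear_combination mul_log_le_one_sub_mul_log hp.1 hp.2.le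
  linear_combination
    mul_le_mul_of_nonneg_left hsign (binEntropy_pos hp.1 (by linarith [hp.2])).le

theorem four_mul_log_two_mul_le_binEntropy_s5 {p : ℝ} (hp₀ : 0 ≤ p) (hp₁ : p ≤ 1) :
    4 * log 2 * (p * (1 - p)) ≤ binEntropy p := by
  wlog hp : p ≤ 2⁻¹ generalizing p
  · simpa [mul_comm p] using this (p := 1 - p) (by linarith) (by linarith) (by linarith)
  rcases hp₀.eq_or_lt with rfl | hp₀
  · simp
  have := monotoneOn_mul_one_sub_div_binEntropy ⟨hp₀, hp⟩ ⟨by norm_num, le_rfl⟩ hp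
  simp only at this
  rw [binEntropy_two_inv,
    div_le_div_iff₀ (binEntropy_pos hp₀ (by linarith)) (log_pos one_lt_two)] at this
  linarith

theorem binEntropy_le_two_mul_log_two_mul_sqrt_s5 {p : ℝ} (hp₀ : 0 ≤ p) (hp₁ : p ≤ 1) :
    binEntropy p ≤ 2 * log 2 * √(p * (1 - p)) := by
  wlog hp : p ≤ 2⁻¹ generalizing p
  · simpa [mul_comm p] using this (p := 1 - p) (by linarith) (by linarith) (by linarith)
  rcases hp₀.eq_or_lt with rfl | hp₀
  · simp
  have := monotoneOn_binEntropy_sq_div_mul_one_sub ⟨hp₀, hp⟩ ⟨by norm_num, le_rfl⟩ hp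
  simp only at this
  rw [binEntropy_two_inv, div_le_div_iff₀ (by nlinarith) (by norm_num)] at this
  refine le_of_pow_le_pow_left₀ two_ne_zero (by positivity) ?_
  rw [mul_pow, sq_sqrt (by nlinarith)]
  linarith

section Pair

variable {a b : ℝ}

theorem div_add_le_one (ha : 0 ≤ a) (hb : 0 ≤ b) : a / (a + b) ≤ 1 :=
  div_le_one_of_le₀ (le_add_of_nonneg_right hb) (add_nonneg ha hb)

theorem mul_eq_sq_add_mul_div_mul_one_sub_div (hab : a + b ≠ 0) :
    a * b = (a + b) ^ 2 * (a / (a + b) * (1 - a / (a + b))) := by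
  field_simp; ring

theorem mul_binEntropy_div_add_nonneg (ha : 0 ≤ a) (hb : 0 ≤ b) :
    0 ≤ (a + b) * binEntropy (a / (a + b)) :=
  mul_nonneg (add_nonneg ha hb)
    (binEntropy_nonneg (div_nonneg ha (add_nonneg ha hb)) (div_add_le_one ha hb))

theorem neg_mul_logb_div_add_mul_logb_div (ha : 0 ≤ a) (hb : 0 ≤ b) :
    -(a * logb 2 (a / (a + b)) + b * logb 2 (b / (a + b))) =
      (a + b) * binEntropy (a / (a + b)) / log 2 := by
  rcases (add_nonneg ha hb).eq_or_lt with hs | hs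
  · obtain ⟨rfl, rfl⟩ : a = 0 ∧ b = 0 := ⟨by linarith, by linarith⟩
    simp
  have h_one_sub : 1 - a / (a + b) = b / (a + b) := by field_simp; ring
  rw [binEntropy_eq_neg_mul_log_sub_mul_log, h_one_sub, logb, logb]
  field_simp
  ring

theorem four_mul_log_two_mul_le_sq_mul_binEntropy (ha : 0 ≤ a) (hb : 0 ≤ b) :
    4 * log 2 * (a * b) ≤ (a + b) ^ 2 * binEntropy (a / (a + b)) := by
  rcases (add_nonneg ha hb).eq_or_lt with hs | hs
  · obtain ⟨rfl, rfl⟩ : a = 0 ∧ b = 0 := ⟨by linarith, by linarith⟩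
    simp
  have := four_mul_log_two_mul_le_binEntropy_s5 (by positivity) (div_add_le_one ha hb)
  rw [mul_eq_sq_add_mul_div_mul_one_sub_div hs.ne']
  nlinarith

theorem mul_binEntropy_le_two_mul_log_two_mul_sqrt (ha : 0 ≤ a) (hb : 0 ≤ b) :
    (a + b) * binEntropy (a / (a + b)) ≤ 2 * log 2 * √(a * b) := by
  rcases (add_nonneg ha hb).eq_or_lt with hs | hs
  · obtain ⟨rfl, rfl⟩ : a = 0 ∧ b = 0 := ⟨by linarith, by linarith⟩
    simp
  have := binEntropy_le_two_mul_log_two_mul_sqrt_s5 (by positivity) (div_add_le_one ha hb)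
  rw [mul_eq_sq_add_mul_div_mul_one_sub_div hs.ne', sqrt_mul (sq_nonneg _), sqrt_sq hs.le]
  nlinarith

end Pair

theorem bhattacharyya_sq_le_ent_le_bhattacharyya
    {Q : Type*} [Fintype Q] (P : Fin 2 → Q → ℝ)
    (hP : ∀ u q, 0 ≤ P u q) (hsum : ∑ u, ∑ q, P u q = 1) :
    (2 * ∑ q, Real.sqrt (P 0 q * P 1 q))^2 ≤
      (-∑ q, ∑ u, P u q * Real.logb 2 (P u q / (P 0 q + P 1 q))) ∧
    (-∑ q, ∑ u, P u q * Real.logb 2 (P u q / (P 0 q + P 1 q))) ≤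
      2 * ∑ q, Real.sqrt (P 0 q * P 1 q) := by
  set H : Q → ℝ := fun q ↦ (P 0 q + P 1 q) * binEntropy (P 0 q / (P 0 q + P 1 q)) / log 2
  have hH : -∑ q, ∑ u, P u q * logb 2 (P u q / (P 0 q + P 1 q)) = ∑ q, H q := by
    rw [← sum_neg_distrib]
    refine sum_congr rfl fun q _ ↦ ?_
    rw [Fin.sum_univ_two]
    exact neg_mul_logb_div_add_mul_logb_div (hP 0 q) (hP 1 q)
  have hmass : ∑ q, (P 0 q + P 1 q) = 1 := by rwa [Fin.sum_univ_two, ← sum_add_distrib] at hsum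
  have hlog2 : 0 < log 2 := log_pos one_lt_two
  rw [hH, mul_sum]
  constructor
  · calc (∑ q, 2 * √(P 0 q * P 1 q)) ^ 2 ≤ (∑ q, (P 0 q + P 1 q)) * ∑ q, H q := by
          refine sum_sq_le_sum_mul_sum_of_sq_le_mul _ (fun q _ ↦ add_nonneg (hP 0 q) (hP 1 q))
            (fun q _ ↦ ?_) fun q _ ↦ ?_
          · exact div_nonneg (mul_binEntropy_div_add_nonneg (hP 0 q) (hP 1 q)) hlog2.le
          · rw [mul_pow, sq_sqrt (mul_nonneg (hP 0 q) (hP 1 q)), mul_div_assoc',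
              le_div_iff₀ hlog2]
            linear_combination four_mul_log_two_mul_le_sq_mul_binEntropy (hP 0 q) (hP 1 q)
      _ = ∑ q, H q := by rw [hmass, one_mul]
  · exact sum_le_sum fun q _ ↦ (div_le_iff₀ hlog2).2 <| by
      linarith [mul_binEntropy_le_two_mul_log_two_mul_sqrt (hP 0 q) (hP 1 q)]
end

section
/- Let U be a binary random variable and Q a finite-alphabet random variable with joint pmf P. Define T(U|Q) = Σ_q |P(0,q) - P(1,q)| and Z(U|Q) = 2 Σ_q √(P(0,q) P(1,q)). Then T(U|Q)² + Z(U|Q)² ≤ 1; in particular T(U|Q) ≤ √(1 - Z(U|Q)²). -/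
open Finset

private lemma cs2 (a b c d : ℝ) :
    a*c + b*d ≤ Real.sqrt (a^2+b^2) * Real.sqrt (c^2+d^2) := by
  have h1 : (a*c+b*d)^2 ≤ (a^2+b^2)*(c^2+d^2) := by nlinarith [sq_nonneg (a*d - b*c)]
  calc a*c+b*d ≤ |a*c+b*d| := le_abs_self _
    _ = Real.sqrt ((a*c+b*d)^2) := (Real.sqrt_sq_eq_abs _).symm
    _ ≤ Real.sqrt ((a^2+b^2)*(c^2+d^2)) := Real.sqrt_le_sqrt h1
    _ = Real.sqrt (a^2+b^2) * Real.sqrt (c^2+d^2) := Real.sqrt_mul (by positivity) _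

theorem tv_sq_plus_bhattacharyya_sq_le_one
    {Q : Type*} [Fintype Q] (P : Fin 2 → Q → ℝ)
    (hP : ∀ u q, 0 ≤ P u q) (hsum : ∑ u, ∑ q, P u q = 1) :
    (∑ q, |P 0 q - P 1 q|)^2 + (2 * ∑ q, Real.sqrt (P 0 q * P 1 q))^2 ≤ 1 ∧
    (∑ q, |P 0 q - P 1 q|) ≤
      Real.sqrt (1 - (2 * ∑ q, Real.sqrt (P 0 q * P 1 q))^2) := by
  set T := ∑ q, |P 0 q - P 1 q| with hT
  set Z := 2 * ∑ q, Real.sqrt (P 0 q * P 1 q) with hZ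
  have hT0 : 0 ≤ T := Finset.sum_nonneg fun q _ => abs_nonneg _
  have hS0 : 0 ≤ T^2 + Z^2 := by positivity
  have hsum1 : ∑ q, (P 0 q + P 1 q) = 1 := by
    rw [Finset.sum_add_distrib]
    simpa [Fin.sum_univ_two] using hsum
  have key : T^2 + Z^2 ≤ Real.sqrt (T^2 + Z^2) := by
    have expand : T^2 + Z^2 = ∑ q, (T * |P 0 q - P 1 q| + Z * (2 * Real.sqrt (P 0 q * P 1 q))) := by
      rw [Finset.sum_add_distrib, ← Finset.mul_sum, ← Finset.mul_sum, ← Finset.mul_sum]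
      rw [hT, hZ]; ring
    conv_lhs => rw [expand]
    calc ∑ q, (T * |P 0 q - P 1 q| + Z * (2 * Real.sqrt (P 0 q * P 1 q)))
        ≤ ∑ q, Real.sqrt (T^2 + Z^2) * (P 0 q + P 1 q) := by
          apply Finset.sum_le_sum
          intro q _
          have h := cs2 T Z (|P 0 q - P 1 q|) (2 * Real.sqrt (P 0 q * P 1 q))
          have hab : (|P 0 q - P 1 q|)^2 + (2 * Real.sqrt (P 0 q * P 1 q))^2
              = (P 0 q + P 1 q)^2 := by
            rw [sq_abs, mul_pow, Real.sq_sqrt (mul_nonneg (hP 0 q) (hP 1 q))]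
            ring
          rw [hab, Real.sqrt_sq (by have := hP 0 q; have := hP 1 q; linarith)] at h
          exact h
      _ = Real.sqrt (T^2 + Z^2) := by rw [← Finset.mul_sum, hsum1, mul_one]
  have h1 : T^2 + Z^2 ≤ 1 := by
    have hs := Real.sq_sqrt hS0
    nlinarith [Real.sqrt_nonneg (T^2+Z^2), sq_nonneg (Real.sqrt (T^2+Z^2) - 1)]
  refine ⟨h1, ?_⟩
  rw [Real.le_sqrt hT0]
  · linarith

  · nlinarith [sq_nonneg T]
end

section
/- Let P be a joint pmf of a binary variable and a finite-alphabet variable, and suppose (U,Q) and (V,R) are independent pairs each distributed according to P. Define T = U + V (mod 2). Then the total variation distance of T given (Q,R) equals the square of that of U given Q: Σ_{q,r} |Σ_v P(v,q)P(v,r) - Σ_v P(v+1,q)P(v,r)| = (Σ_q |P(0,q) - P(1,q)|)². -/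
open Finset

theorem tv_minus_transform_eq_sq
    {Q : Type*} [Fintype Q] (P : Fin 2 → Q → ℝ)
    (hP : ∀ u q, 0 ≤ P u q) (hsum : ∑ u, ∑ q, P u q = 1) :
    (∑ q, ∑ r, |(∑ v, P v q * P v r) - ∑ v, P (v + 1) q * P v r|) =
      (∑ q, |P 0 q - P 1 q|)^2 := by
  have h : ∀ q r : Q, (∑ v, P v q * P v r) - ∑ v, P (v + 1) q * P v r
      = (P 0 q - P 1 q) * (P 0 r - P 1 r) := by
    intro q r
    simp [Fin.sum_univ_two]
    ring
  simp only [h, abs_mul]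
  rw [sq, Finset.sum_mul_sum]
end

section
/- Let P be a joint pmf on {0,1} × Q with Q finite, and let (U,Q), (V,R) be independent pairs each with law P. Define T = U + V (mod 2). Then the total variation distance of V given (T,Q,R) satisfies Σ_{t,q,r} |P(t,q)P(0,r) - P(t+1,q)P(1,r)| ≤ 2 Σ_q |P(0,q) - P(1,q)|, i.e., T(V|T,Q,R) ≤ 2·T(U|Q). -/
open Finset

lemma tv_key (a b c d : ℝ) (ha : 0 ≤ a) (hb : 0 ≤ b) (hc : 0 ≤ c) (hd : 0 ≤ d) :
    |a * b - c * d| + |c * b - a * d| ≤ |a - c| * (b + d) + (a + c) * |b - d| := by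
  have h1 : |a * b - c * d| ≤ |a - c| * (b + d) / 2 + (a + c) * |b - d| / 2 := by
    rw [abs_le]
    constructor <;>
      nlinarith [le_abs_self (a - c), neg_abs_le (a - c), le_abs_self (b - d),
        neg_abs_le (b - d), abs_nonneg (a - c), abs_nonneg (b - d)]
  have h2 : |c * b - a * d| ≤ |a - c| * (b + d) / 2 + (a + c) * |b - d| / 2 := by
    rw [abs_le]
    constructor <;>
      nlinarith [le_abs_self (a - c), neg_abs_le (a - c), le_abs_self (b - d),
        neg_abs_le (b - d), abs_nonneg (a - c), abs_nonneg (b - d)]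
  linarith

theorem tv_plus_transform_le_two_tv
    {Q : Type*} [Fintype Q] (P : Fin 2 → Q → ℝ)
    (hP : ∀ u q, 0 ≤ P u q) (hsum : ∑ u, ∑ q, P u q = 1) :
    (∑ t, ∑ q, ∑ r, |P t q * P 0 r - P (t + 1) q * P 1 r|) ≤
      2 * ∑ q, |P 0 q - P 1 q| := by
  rw [Fin.sum_univ_two] at hsum ⊢
  have e1 : ((0 : Fin 2) + 1) = 1 := rfl
  have e2 : ((1 : Fin 2) + 1) = 0 := rfl
  rw [e1, e2]
  rw [← Finset.sum_add_distrib]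
  have step : ∀ q ∈ (univ : Finset Q),
      (∑ r, |P 0 q * P 0 r - P 1 q * P 1 r| + ∑ r, |P 1 q * P 0 r - P 0 q * P 1 r|)
        ≤ ∑ r, (|P 0 q - P 1 q| * (P 0 r + P 1 r) + (P 0 q + P 1 q) * |P 0 r - P 1 r|) := by
    intro q _
    rw [← Finset.sum_add_distrib]
    exact Finset.sum_le_sum fun r _ =>
      tv_key (P 0 q) (P 0 r) (P 1 q) (P 1 r) (hP 0 q) (hP 0 r) (hP 1 q) (hP 1 r)
  refine le_trans (Finset.sum_le_sum step) ?_
  have expand : ∑ q, ∑ r, (|P 0 q - P 1 q| * (P 0 r + P 1 r) + (P 0 q + P 1 q) * |P 0 r - P 1 r|)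
      = (∑ q, |P 0 q - P 1 q|) * (∑ r, (P 0 r + P 1 r))
        + (∑ q, (P 0 q + P 1 q)) * (∑ r, |P 0 r - P 1 r|) := by
    simp only [Finset.sum_add_distrib, ← Finset.sum_mul, ← Finset.mul_sum]
  rw [expand]
  have h1 : (∑ r, (P 0 r + P 1 r)) = 1 := by rw [Finset.sum_add_distrib]; linarith
  have h2 : (∑ q, (P 0 q + P 1 q)) = 1 := by rw [Finset.sum_add_distrib]; linarith
  rw [h1]
  linarith
end

section
/- Let U take values in a finite alphabet of size L ≥ 2 and Q in a finite alphabet, with joint pmf. Define Z_L(U|Q) = (1/(L-1)) Σ_q Σ_{u ≠ u'} P(q) √(P(u|q)P(u'|q)) and T_L(U|Q) = (1/(2(L-1))) Σ_q Σ_{u ≠ u'} P(q) |P(u|q) - P(u'|q)|. Then Z_L(U|Q)² + T_L(U|Q)² ≤ 1. -/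
/-!
For `a, b ≥ 0` the vector `(2√(ab), |a - b|)` has Euclidean length `a + b`. Hence `(2(L-1) Z, 2(L-1) T)`
is a sum of plane vectors whose lengths add up to `∑_q P(q) ∑_{u ≠ u'} (P(u|q) + P(u'|q)) = 2(L-1)`,
and the triangle inequality bounds its length by `2(L-1)`.
-/

open Finset

/-- Triangle inequality in the Euclidean plane, written coordinatewise. -/
theorem sq_sum_add_sq_sum_le_sq_sum {ι : Type*} (s : Finset ι) (x y w : ι → ℝ)
    (hw : ∀ i ∈ s, 0 ≤ w i) (h : ∀ i ∈ s, x i ^ 2 + y i ^ 2 ≤ w i ^ 2) :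
    (∑ i ∈ s, x i) ^ 2 + (∑ i ∈ s, y i) ^ 2 ≤ (∑ i ∈ s, w i) ^ 2 := by
  let z : ι → ℂ := fun i => ⟨x i, y i⟩
  have hz : ∀ i ∈ s, ‖z i‖ ≤ w i := fun i hi => by
    rw [Complex.norm_def, Complex.normSq_mk, Real.sqrt_le_left (hw i hi)]
    nlinarith [h i hi]
  have hsum : ‖∑ i ∈ s, z i‖ ≤ ∑ i ∈ s, w i :=
    (norm_sum_le _ _).trans (sum_le_sum hz)
  have hnorm : ‖∑ i ∈ s, z i‖ ^ 2 = (∑ i ∈ s, x i) ^ 2 + (∑ i ∈ s, y i) ^ 2 := by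
    rw [Complex.sq_norm, Complex.normSq_apply, Complex.re_sum, Complex.im_sum]
    ring
  rw [← hnorm]
  exact pow_le_pow_left₀ (norm_nonneg _) hsum 2

theorem sq_two_mul_sqrt_mul_add_sq_abs_sub {a b : ℝ} (ha : 0 ≤ a) (hb : 0 ≤ b) :
    (2 * √(a * b)) ^ 2 + |a - b| ^ 2 = (a + b) ^ 2 := by
  rw [mul_pow, Real.sq_sqrt (mul_nonneg ha hb), sq_abs]
  ring

theorem sum_sum_erase_add_eq {U : Type*} [Fintype U] [DecidableEq U] (W : U → ℝ) :
    ∑ u, ∑ u' ∈ univ.erase u, (W u + W u') = 2 * ((Fintype.card U : ℝ) - 1) * ∑ u, W u := by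
  simp only [sum_add_distrib, sum_const, card_univ, nsmul_eq_mul, sum_erase_eq_sub (mem_univ _),
    sum_sub_distrib, ← mul_sum]
  ring

theorem sq_two_mul_sum_sqrt_add_sq_sum_abs_le {U : Type*} [Fintype U] [DecidableEq U]
    (W : U → ℝ) (hW : ∀ u, 0 ≤ W u) :
    (2 * ∑ u, ∑ u' ∈ univ.erase u, √(W u * W u')) ^ 2 +
        (∑ u, ∑ u' ∈ univ.erase u, |W u - W u'|) ^ 2 ≤
      (∑ u, ∑ u' ∈ univ.erase u, (W u + W u')) ^ 2 := by
  simp only [mul_sum]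
  refine sq_sum_add_sq_sum_le_sq_sum _ _ _ _
    (fun u _ => sum_nonneg fun u' _ => add_nonneg (hW u) (hW u')) fun u _ => ?_
  refine sq_sum_add_sq_sum_le_sq_sum _ _ _ _
    (fun u' _ => add_nonneg (hW u) (hW u')) fun u' _ => ?_
  exact (sq_two_mul_sqrt_mul_add_sq_abs_sub (hW u) (hW u')).le

theorem nonbinary_bhattacharyya_sq_plus_tv_sq_le_one_general
    {U Q : Type*} [Fintype U] [DecidableEq U] [Fintype Q] (L : ℕ)
    (hcard : Fintype.card U = L)
    (p : Q → ℝ) (W : Q → U → ℝ)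
    (hp : ∀ q, 0 ≤ p q) (hpsum : ∑ q, p q = 1)
    (hW : ∀ q u, 0 ≤ W q u) (hWsum : ∀ q, ∑ u, W q u = 1) :
    ((1 / ((L : ℝ) - 1)) *
        ∑ q, p q * ∑ u, ∑ u' ∈ Finset.univ.erase u, Real.sqrt (W q u * W q u'))^2 +
      ((1 / (2 * ((L : ℝ) - 1))) *
        ∑ q, p q * ∑ u, ∑ u' ∈ Finset.univ.erase u, |W q u - W q u'|)^2 ≤ 1 := by
  set c := (L : ℝ) - 1
  set A := fun q => ∑ u, ∑ u' ∈ univ.erase u, √(W q u * W q u')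
  set B := fun q => ∑ u, ∑ u' ∈ univ.erase u, |W q u - W q u'|
  set C := fun q => ∑ u, ∑ u' ∈ univ.erase u, (W q u + W q u')
  have hC : ∀ q, C q = 2 * c := fun q => by
    simp only [C, c, sum_sum_erase_add_eq, hWsum, hcard, mul_one]
  have hbound : (∑ q, p q * (2 * A q)) ^ 2 + (∑ q, p q * B q) ^ 2 ≤ (∑ q, p q * C q) ^ 2 :=
    sq_sum_add_sq_sum_le_sq_sum _ _ _ _
      (fun q _ => mul_nonneg (hp q) (sum_nonneg fun u _ => sum_nonneg fun u' _ =>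
        add_nonneg (hW q u) (hW q u')))
      fun q _ => by
        have := mul_le_mul_of_nonneg_left (sq_two_mul_sum_sqrt_add_sq_sum_abs_le _ (hW q))
          (sq_nonneg (p q))
        rwa [mul_add, ← mul_pow, ← mul_pow, ← mul_pow] at this
  simp only [hC, ← sum_mul, hpsum, one_mul] at hbound
  clear_value c
  show (1 / c * ∑ q, p q * A q) ^ 2 + (1 / (2 * c) * ∑ q, p q * B q) ^ 2 ≤ 1
  calc _ = ((∑ q, p q * (2 * A q)) ^ 2 + (∑ q, p q * B q) ^ 2) / (2 * c) ^ 2 := by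
        rw [← sum_congr rfl fun q _ => mul_left_comm 2 (p q) (A q), ← mul_sum]
        ring
    _ ≤ 1 := div_le_one_of_le₀ hbound (sq_nonneg _)

theorem nonbinary_bhattacharyya_sq_plus_tv_sq_le_one
    {U Q : Type*} [Fintype U] [DecidableEq U] [Fintype Q] (L : ℕ) (hL : 2 ≤ L)
    (hcard : Fintype.card U = L)
    (p : Q → ℝ) (W : Q → U → ℝ)
    (hp : ∀ q, 0 ≤ p q) (hpsum : ∑ q, p q = 1)
    (hW : ∀ q u, 0 ≤ W q u) (hWsum : ∀ q, ∑ u, W q u = 1) :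
    ((1 / ((L : ℝ) - 1)) *
        ∑ q, p q * ∑ u, ∑ u' ∈ Finset.univ.erase u, Real.sqrt (W q u * W q u'))^2 +
      ((1 / (2 * ((L : ℝ) - 1))) *
        ∑ q, p q * ∑ u, ∑ u' ∈ Finset.univ.erase u, |W q u - W q u'|)^2 ≤ 1 :=
  nonbinary_bhattacharyya_sq_plus_tv_sq_le_one_general L hcard p W hp hpsum hW hWsum
end

section
/- Let U take values in a finite alphabet of size L and Q in a finite alphabet, with joint pmf. With Z_L and T_L as defined (L-ary Bhattacharyya parameter and total variation distance), Z_L(U|Q) + T_L(U|Q) ≥ 1. -/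
open Finset

lemma sqrt_plus_abs_half (a b : ℝ) (ha : 0 ≤ a) (hb : 0 ≤ b) :
    (a + b) / 2 ≤ Real.sqrt (a * b) + |a - b| / 2 := by
  have hmin : 0 ≤ min a b := le_min ha hb
  have h1 : min a b ≤ Real.sqrt (a * b) := by
    calc min a b = Real.sqrt (min a b * min a b) := (Real.sqrt_mul_self hmin).symm
      _ ≤ Real.sqrt (a * b) :=
          Real.sqrt_le_sqrt (mul_le_mul (min_le_left a b) (min_le_right a b) hmin ha)
  rcases le_total a b with h | h
  · rw [min_eq_left h] at h1
    rw [abs_of_nonpos (by linarith)]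
    linarith
  · rw [min_eq_right h] at h1
    rw [abs_of_nonneg (by linarith)]
    linarith

theorem nonbinary_bhattacharyya_plus_tv_ge_one
    {U Q : Type*} [Fintype U] [DecidableEq U] [Fintype Q] (L : ℕ) (hL : 2 ≤ L)
    (hcard : Fintype.card U = L)
    (p : Q → ℝ) (W : Q → U → ℝ)
    (hp : ∀ q, 0 ≤ p q) (hpsum : ∑ q, p q = 1)
    (hW : ∀ q u, 0 ≤ W q u) (hWsum : ∀ q, ∑ u, W q u = 1) :
    (1 / ((L : ℝ) - 1)) *
        (∑ q, p q * ∑ u, ∑ u' ∈ Finset.univ.erase u, Real.sqrt (W q u * W q u')) +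
      (1 / (2 * ((L : ℝ) - 1))) *
        (∑ q, p q * ∑ u, ∑ u' ∈ Finset.univ.erase u, |W q u - W q u'|) ≥ 1 := by
  have hL1 : (1:ℝ) ≤ (L:ℝ) - 1 := by
    have : (2:ℝ) ≤ (L:ℝ) := by exact_mod_cast hL
    linarith
  have hLpos : (0:ℝ) < (L:ℝ) - 1 := by linarith
  have key : ∀ q, ((L:ℝ) - 1) ≤
      (∑ u, ∑ u' ∈ Finset.univ.erase u, Real.sqrt (W q u * W q u')) +
      (∑ u, ∑ u' ∈ Finset.univ.erase u, |W q u - W q u'|) / 2 := by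
    intro q
    have hsum : (∑ u, ∑ u' ∈ Finset.univ.erase u, (W q u + W q u') / 2) = (L:ℝ) - 1 := by
      have hinner : ∀ u : U, (∑ u' ∈ Finset.univ.erase u, (W q u + W q u') / 2)
          = (((L:ℝ) - 1) * W q u + (1 - W q u)) / 2 := by
        intro u
        rw [← Finset.sum_div, Finset.sum_add_distrib, Finset.sum_const,
          Finset.sum_erase_eq_sub (mem_univ u), hWsum q,
          Finset.card_erase_of_mem (mem_univ u), Finset.card_univ, hcard, nsmul_eq_mul]
        push_cast [Nat.cast_sub (by omega : 1 ≤ L)]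
        ring
      rw [Finset.sum_congr rfl (fun u _ => hinner u)]
      simp only [← Finset.sum_div]
      rw [Finset.sum_add_distrib, ← Finset.mul_sum, hWsum q, Finset.sum_sub_distrib,
        Finset.sum_const, Finset.card_univ, hcard, hWsum q, nsmul_eq_mul]
      ring
    calc ((L:ℝ) - 1) = ∑ u, ∑ u' ∈ Finset.univ.erase u, (W q u + W q u') / 2 := hsum.symm
      _ ≤ ∑ u, ∑ u' ∈ Finset.univ.erase u,
            (Real.sqrt (W q u * W q u') + |W q u - W q u'| / 2) := by
          apply Finset.sum_le_sum; intro u _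
          apply Finset.sum_le_sum; intro u' _
          exact sqrt_plus_abs_half _ _ (hW q u) (hW q u')
      _ = _ := by
          simp only [Finset.sum_add_distrib, ← Finset.sum_div]
  have main : ((L:ℝ) - 1) ≤
      (∑ q, p q * ∑ u, ∑ u' ∈ Finset.univ.erase u, Real.sqrt (W q u * W q u')) +
      (∑ q, p q * ∑ u, ∑ u' ∈ Finset.univ.erase u, |W q u - W q u'|) / 2 := by
    have h0 : ((L:ℝ) - 1) = ∑ q, p q * ((L:ℝ) - 1) := by
      rw [← Finset.sum_mul, hpsum, one_mul]
    rw [h0]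
    calc ∑ q, p q * ((L:ℝ) - 1)
        ≤ ∑ q, p q * ((∑ u, ∑ u' ∈ Finset.univ.erase u, Real.sqrt (W q u * W q u')) +
          (∑ u, ∑ u' ∈ Finset.univ.erase u, |W q u - W q u'|) / 2) := by
          apply Finset.sum_le_sum; intro q _
          exact mul_le_mul_of_nonneg_left (key q) (hp q)
      _ = _ := by
          simp only [mul_add, ← mul_div_assoc, Finset.sum_add_distrib, ← Finset.sum_div]
  have hA : (1 / ((L : ℝ) - 1)) *
        (∑ q, p q * ∑ u, ∑ u' ∈ Finset.univ.erase u, Real.sqrt (W q u * W q u')) +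
      (1 / (2 * ((L : ℝ) - 1))) *
        (∑ q, p q * ∑ u, ∑ u' ∈ Finset.univ.erase u, |W q u - W q u'|)
      = (1 / ((L:ℝ) - 1)) *
        ((∑ q, p q * ∑ u, ∑ u' ∈ Finset.univ.erase u, Real.sqrt (W q u * W q u')) +
        (∑ q, p q * ∑ u, ∑ u' ∈ Finset.univ.erase u, |W q u - W q u'|) / 2) := by
    field_simp
  rw [hA, ge_iff_le]
  calc (1:ℝ) = (1 / ((L:ℝ) - 1)) * ((L:ℝ) - 1) := by field_simp
    _ ≤ _ := mul_le_mul_of_nonneg_left main (by positivity)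
end

section
/- Let U take values in a finite alphabet of size L and Q in a finite alphabet. The L-ary total variation distance and probability of error satisfy T_L(U|Q) ≤ 1 - (2/(L-1)) P_e(U|Q), where P_e(U|Q) = Σ_q P(q)(1 - max_u P(u|q)). -/
open Finset

lemma pointwise_tv_bound {U : Type*} [Fintype U] [DecidableEq U] [Nonempty U]
    (L : ℕ) (hL : 2 ≤ L) (hcard : Fintype.card U = L)
    (w : U → ℝ) (hw : ∀ u, 0 ≤ w u) (hsum : ∑ u, w u = 1) :
    ∑ u, ∑ u' ∈ Finset.univ.erase u, |w u - w u'| ≤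
      2 * ((L : ℝ) - 1) - 4 * (1 - Finset.univ.sup' Finset.univ_nonempty w) := by
  obtain ⟨m, -, hm⟩ := Finset.exists_mem_eq_sup' Finset.univ_nonempty w
  have hle : ∀ u, w u ≤ w m := fun u => hm ▸ Finset.le_sup' w (mem_univ u)
  rw [hm]
  have hcardL : (1:ℕ) ≤ L := le_trans one_le_two hL
  -- termwise bound
  have step : ∑ u, ∑ u' ∈ Finset.univ.erase u, |w u - w u'| ≤
      ∑ u, ∑ u' ∈ Finset.univ.erase u,
        (w u + w u' - 2 * ((if u = m then w u' else 0) + (if u' = m then w u else 0))) := by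
    refine Finset.sum_le_sum fun u _ => Finset.sum_le_sum fun u' hu' => ?_
    have hne : u' ≠ u := (Finset.mem_erase.mp hu').1
    by_cases h1 : u = m
    · subst h1
      rw [if_pos rfl, if_neg hne, abs_of_nonneg (sub_nonneg.mpr (hle u'))]
      linarith [hle u']
    · by_cases h2 : u' = m
      · subst h2
        rw [if_neg h1, if_pos rfl, abs_of_nonpos (sub_nonpos.mpr (hle u))]
        linarith [hle u]
      · simp only [if_neg h1, if_neg h2]
        rcases abs_cases (w u - w u') with ⟨h, -⟩ | ⟨h, -⟩ <;>
          rw [h] <;> linarith [hw u, hw u']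
  refine le_trans step (le_of_eq ?_)
  have herase : ∀ u : U, ∑ u' ∈ Finset.univ.erase u, w u' = 1 - w u := by
    intro u
    rw [Finset.sum_erase_eq_sub (mem_univ u), hsum]
  have hcarde : ∀ u : U, ((Finset.univ.erase u).card : ℝ) = (L : ℝ) - 1 := by
    intro u
    rw [Finset.card_erase_of_mem (mem_univ u), Finset.card_univ, hcard]
    push_cast [Nat.cast_sub hcardL]
    ring
  have e1 : ∑ u, ∑ u' ∈ Finset.univ.erase u,
      (w u + w u' - 2 * ((if u = m then w u' else 0) + (if u' = m then w u else 0))) =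
      ∑ u, ((((L:ℝ) - 1) * w u + (1 - w u))
        - 2 * ((if u = m then (1 - w u) else 0) + (if u = m then 0 else w u))) := by
    refine Finset.sum_congr rfl fun u _ => ?_
    have hX : ∑ u' ∈ Finset.univ.erase u, (if u = m then w u' else 0) =
        (if u = m then (1 - w u) else 0) := by
      by_cases h : u = m
      · simp only [if_pos h, herase u]
      · simp only [if_neg h, Finset.sum_const_zero]
    have hY : ∑ u' ∈ Finset.univ.erase u, (if u' = m then w u else 0) =
        (if u = m then 0 else w u) := by
      rw [Finset.sum_ite_eq' (Finset.univ.erase u) m (fun _ => w u)]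
      by_cases h : u = m
      · simp [h]
      · simp [Finset.mem_erase, Ne.symm h, h]
    rw [Finset.sum_sub_distrib, Finset.sum_add_distrib, Finset.sum_const, nsmul_eq_mul,
      herase u, hcarde u, ← Finset.mul_sum, Finset.sum_add_distrib, hX, hY]
  rw [e1]
  have A : ∑ u : U, (if u = m then (1 - w u) else 0) = 1 - w m := by
    rw [Finset.sum_ite_eq' Finset.univ m (fun u => 1 - w u)]
    simp
  have B : ∑ u : U, (if u = m then 0 else w u) = 1 - w m := by
    have h1 : ∀ u : U, (if u = m then (0:ℝ) else w u) = w u - (if u = m then w u else 0) := by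
      intro u; by_cases h : u = m <;> simp [h]
    simp only [h1]
    rw [Finset.sum_sub_distrib, hsum, Finset.sum_ite_eq' Finset.univ m w]
    simp
  rw [Finset.sum_sub_distrib, Finset.sum_add_distrib, ← Finset.mul_sum, hsum,
    Finset.sum_sub_distrib, Finset.sum_const, Finset.card_univ, hcard, hsum,
    ← Finset.mul_sum, Finset.sum_add_distrib, A, B, nsmul_eq_mul]
  ring

theorem nonbinary_tv_le_one_sub_pe
    {U Q : Type*} [Fintype U] [DecidableEq U] [Fintype Q] [Nonempty U] (L : ℕ) (hL : 2 ≤ L)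
    (hcard : Fintype.card U = L)
    (p : Q → ℝ) (W : Q → U → ℝ)
    (hp : ∀ q, 0 ≤ p q) (hpsum : ∑ q, p q = 1)
    (hW : ∀ q u, 0 ≤ W q u) (hWsum : ∀ q, ∑ u, W q u = 1) :
    (1 / (2 * ((L : ℝ) - 1))) *
        (∑ q, p q * ∑ u, ∑ u' ∈ Finset.univ.erase u, |W q u - W q u'|) ≤
      1 - (2 / ((L : ℝ) - 1)) *
        ∑ q, p q * (1 - Finset.univ.sup' Finset.univ_nonempty (fun u => W q u)) := by
  have hL2 : (2:ℝ) ≤ (L:ℝ) := by exact_mod_cast hL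
  have hL1 : (0:ℝ) < (L:ℝ) - 1 := by linarith
  have key : ∀ q, ∑ u, ∑ u' ∈ Finset.univ.erase u, |W q u - W q u'| ≤
      2 * ((L : ℝ) - 1) - 4 * (1 - Finset.univ.sup' Finset.univ_nonempty (fun u => W q u)) :=
    fun q => pointwise_tv_bound L hL hcard (W q) (hW q) (hWsum q)
  have step : (1 / (2 * ((L : ℝ) - 1))) *
        (∑ q, p q * ∑ u, ∑ u' ∈ Finset.univ.erase u, |W q u - W q u'|) ≤
      (1 / (2 * ((L : ℝ) - 1))) *
        ∑ q, p q * (2 * ((L : ℝ) - 1) - 4 * (1 - Finset.univ.sup' Finset.univ_nonempty (fun u => W q u))) := by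
    apply mul_le_mul_of_nonneg_left
    · exact Finset.sum_le_sum fun q _ => mul_le_mul_of_nonneg_left (key q) (hp q)
    · positivity
  refine le_trans step (le_of_eq ?_)
  have expand : ∀ q, (1 / (2 * ((L:ℝ) - 1))) *
      (p q * (2 * ((L : ℝ) - 1) - 4 * (1 - Finset.univ.sup' Finset.univ_nonempty (fun u => W q u))))
      = p q - (2 / ((L:ℝ) - 1)) *
        (p q * (1 - Finset.univ.sup' Finset.univ_nonempty (fun u => W q u))) := by
    intro q
    have hne : (L:ℝ) - 1 ≠ 0 := ne_of_gt hL1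
    field_simp
    ring
  rw [Finset.mul_sum]
  rw [Finset.sum_congr rfl fun q _ => expand q, Finset.sum_sub_distrib, hpsum,
    ← Finset.mul_sum]
end

section
/- Let P be a joint pmf on Z_L × Q (Q finite) and let (U,Q), (V,R) be independent with law P. Define T = U + V (mod L). Then the L-ary total variation distance satisfies T_L(T|Q,R) ≤ (2(L-1)/L) · T_L(U|Q)², where T_L(U|Q) = (1/(2(L-1))) Σ_q Σ_{u≠u'} |P(u,q) - P(u',q)|. -/
open Finset

private lemma shift_double_sum (L : ℕ) [NeZero L] (v : ZMod L) (g : ZMod L → ℝ) :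
    ∑ t : ZMod L, ∑ t' ∈ Finset.univ.erase t, |g (t - v) - g (t' - v)|
      = ∑ t : ZMod L, ∑ t' ∈ Finset.univ.erase t, |g t - g t'| := by
  have h : ∀ (f : ZMod L → ZMod L → ℝ), (∀ t, f t t = 0) →
      ∑ t : ZMod L, ∑ t' ∈ Finset.univ.erase t, f t t' = ∑ t, ∑ t', f t t' := by
    intro f hf
    refine Finset.sum_congr rfl fun t _ => ?_
    exact Finset.sum_erase _ (hf t)
  rw [h _ (by simp), h _ (by simp)]
  calc ∑ t : ZMod L, ∑ t', |g (t - v) - g (t' - v)|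
      = ∑ t : ZMod L, ∑ s', |g (t - v) - g s'| := by
        refine Finset.sum_congr rfl fun t _ => ?_
        exact Fintype.sum_equiv (Equiv.subRight v) _ _ fun t' => rfl
    _ = ∑ s : ZMod L, ∑ s', |g s - g s'| := by
        exact Fintype.sum_equiv (Equiv.subRight v) _ _ fun t => rfl

theorem nonbinary_tv_minus_transform_bound
    (L : ℕ) [NeZero L] (hL : 2 ≤ L) {Q : Type*} [Fintype Q]
    (P : ZMod L → Q → ℝ)
    (hP : ∀ u q, 0 ≤ P u q) (hsum : ∑ u, ∑ q, P u q = 1) :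
    (1 / (2 * ((L : ℝ) - 1))) *
        ∑ q, ∑ r, ∑ t, ∑ t' ∈ Finset.univ.erase t,
          |(∑ v, P (t - v) q * P v r) - ∑ v, P (t' - v) q * P v r| ≤
      (2 * ((L : ℝ) - 1) / (L : ℝ)) *
        ((1 / (2 * ((L : ℝ) - 1))) *
          ∑ q, ∑ u, ∑ u' ∈ Finset.univ.erase u, |P u q - P u' q|)^2 := by
  have hLpos : (0:ℝ) < (L:ℝ) := by positivity
  have hL1 : (0:ℝ) < (L:ℝ) - 1 := by
    have : (2:ℝ) ≤ (L:ℝ) := by exact_mod_cast hL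
    linarith
  have hLne : (L:ℝ) ≠ 0 := ne_of_gt hLpos
  set D : Q → ℝ := fun q => ∑ u, ∑ u' ∈ Finset.univ.erase u, |P u q - P u' q| with hD
  have hDnn : ∀ q, 0 ≤ D q := fun q =>
    Finset.sum_nonneg fun u _ => Finset.sum_nonneg fun u' _ => abs_nonneg _
  -- Step 2: centered L¹ bound
  have step2 : ∀ r : Q, ∑ v, |P v r - (∑ w, P w r) / L| ≤ D r / L := by
    intro r
    have key : ∀ v : ZMod L, |P v r - (∑ w, P w r) / L|
        ≤ (1 / L) * ∑ v' ∈ Finset.univ.erase v, |P v r - P v' r| := by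
      intro v
      have hsum' : ∑ v' : ZMod L, (P v r - P v' r) = (L:ℝ) * P v r - ∑ w, P w r := by
        rw [Finset.sum_sub_distrib, Finset.sum_const, Finset.card_univ, ZMod.card]
        ring
      have : P v r - (∑ w, P w r) / L = (1 / L) * ∑ v' : ZMod L, (P v r - P v' r) := by
        rw [hsum']; field_simp
      rw [this, abs_mul, abs_of_nonneg (by positivity : (0:ℝ) ≤ 1 / (L:ℝ))]
      have h1 : |∑ v' : ZMod L, (P v r - P v' r)| ≤ ∑ v' : ZMod L, |P v r - P v' r| :=
        Finset.abs_sum_le_sum_abs _ _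
      have h2 : ∑ v' : ZMod L, |P v r - P v' r|
          = ∑ v' ∈ Finset.univ.erase v, |P v r - P v' r| :=
        (Finset.sum_erase _ (by simp)).symm
      rw [← h2]
      exact mul_le_mul_of_nonneg_left h1 (by positivity)
    calc ∑ v, |P v r - (∑ w, P w r) / L|
        ≤ ∑ v, (1 / L) * ∑ v' ∈ Finset.univ.erase v, |P v r - P v' r| :=
          Finset.sum_le_sum fun v _ => key v
      _ = (1 / L) * D r := by rw [← Finset.mul_sum]
      _ = D r / L := by ring
  -- Step 1: per (q,r) bound
  have key : ∀ q r : Q, ∑ t, ∑ t' ∈ Finset.univ.erase t,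
      |(∑ v, P (t - v) q * P v r) - ∑ v, P (t' - v) q * P v r| ≤ D q * (D r / L) := by
    intro q r
    set B : ℝ := ∑ w, P w r with hB
    have expand : ∀ t t' : ZMod L,
        (∑ v, P (t - v) q * P v r) - ∑ v, P (t' - v) q * P v r
          = ∑ v, (P (t - v) q - P (t' - v) q) * (P v r - B / L) := by
      intro t t'
      have h0 : ∑ v : ZMod L, (P (t - v) q - P (t' - v) q) = 0 := by
        rw [Finset.sum_sub_distrib]
        have e1 : ∑ v : ZMod L, P (t - v) q = ∑ u, P u q :=
          Fintype.sum_equiv (Equiv.subLeft t) _ _ fun v => rfl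
        have e2 : ∑ v : ZMod L, P (t' - v) q = ∑ u, P u q :=
          Fintype.sum_equiv (Equiv.subLeft t') _ _ fun v => rfl
        rw [e1, e2, sub_self]
      have h1 : ∑ v : ZMod L, (P (t - v) q - P (t' - v) q) * (P v r - B / L)
          = (∑ v : ZMod L, (P (t - v) q - P (t' - v) q) * P v r)
            - (∑ v : ZMod L, (P (t - v) q - P (t' - v) q)) * (B / L) := by
        rw [Finset.sum_mul, ← Finset.sum_sub_distrib]
        exact Finset.sum_congr rfl fun v _ => by ring
      rw [h1, h0, zero_mul, sub_zero, ← Finset.sum_sub_distrib]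
      exact Finset.sum_congr rfl fun v _ => by ring
    calc ∑ t, ∑ t' ∈ Finset.univ.erase t,
          |(∑ v, P (t - v) q * P v r) - ∑ v, P (t' - v) q * P v r|
        ≤ ∑ t, ∑ t' ∈ Finset.univ.erase t,
            ∑ v, |P (t - v) q - P (t' - v) q| * |P v r - B / L| := by
          refine Finset.sum_le_sum fun t _ => Finset.sum_le_sum fun t' _ => ?_
          rw [expand t t']
          calc |∑ v, (P (t - v) q - P (t' - v) q) * (P v r - B / L)|
              ≤ ∑ v, |(P (t - v) q - P (t' - v) q) * (P v r - B / L)| :=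
                Finset.abs_sum_le_sum_abs _ _
            _ = ∑ v, |P (t - v) q - P (t' - v) q| * |P v r - B / L| := by
                simp [abs_mul]
      _ = ∑ v, ∑ t, ∑ t' ∈ Finset.univ.erase t,
            |P (t - v) q - P (t' - v) q| * |P v r - B / L| := by
          rw [show (∑ t : ZMod L, ∑ t' ∈ Finset.univ.erase t,
              ∑ v, |P (t - v) q - P (t' - v) q| * |P v r - B / L|)
              = ∑ t : ZMod L, ∑ v, ∑ t' ∈ Finset.univ.erase t,
              |P (t - v) q - P (t' - v) q| * |P v r - B / L| from
            Finset.sum_congr rfl fun t _ => Finset.sum_comm]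
          exact Finset.sum_comm
      _ = ∑ v, (∑ t, ∑ t' ∈ Finset.univ.erase t, |P (t - v) q - P (t' - v) q|)
            * |P v r - B / L| := by
          refine Finset.sum_congr rfl fun v _ => ?_
          rw [Finset.sum_mul]
          exact Finset.sum_congr rfl fun t _ => (Finset.sum_mul _ _ _).symm
      _ = ∑ v, D q * |P v r - B / L| := by
          refine Finset.sum_congr rfl fun v _ => ?_
          rw [shift_double_sum L v (fun u => P u q)]
      _ = D q * ∑ v, |P v r - B / L| := by rw [← Finset.mul_sum]
      _ ≤ D q * (D r / L) := mul_le_mul_of_nonneg_left (step2 r) (hDnn q)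
  -- Combine
  have main : ∑ q, ∑ r, ∑ t, ∑ t' ∈ Finset.univ.erase t,
      |(∑ v, P (t - v) q * P v r) - ∑ v, P (t' - v) q * P v r|
        ≤ (∑ q, D q) * (∑ r, D r) / L := by
    calc ∑ q, ∑ r, ∑ t, ∑ t' ∈ Finset.univ.erase t,
          |(∑ v, P (t - v) q * P v r) - ∑ v, P (t' - v) q * P v r|
        ≤ ∑ q, ∑ r, D q * (D r / L) :=
          Finset.sum_le_sum fun q _ => Finset.sum_le_sum fun r _ => key q r
      _ = (∑ q, D q) * (∑ r, D r) / L := by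
          simp_rw [← Finset.mul_sum]
          rw [← Finset.sum_mul, ← Finset.sum_div, mul_div_assoc]
  have h2pos : (0:ℝ) < 1 / (2 * ((L:ℝ) - 1)) := by positivity
  calc (1 / (2 * ((L : ℝ) - 1))) *
        ∑ q, ∑ r, ∑ t, ∑ t' ∈ Finset.univ.erase t,
          |(∑ v, P (t - v) q * P v r) - ∑ v, P (t' - v) q * P v r|
      ≤ (1 / (2 * ((L : ℝ) - 1))) * ((∑ q, D q) * (∑ r, D r) / L) :=
        mul_le_mul_of_nonneg_left main (le_of_lt h2pos)
    _ = (2 * ((L : ℝ) - 1) / (L : ℝ)) *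
        ((1 / (2 * ((L : ℝ) - 1))) * ∑ q, D q)^2 := by
        field_simp
    _ = (2 * ((L : ℝ) - 1) / (L : ℝ)) *
        ((1 / (2 * ((L : ℝ) - 1))) *
          ∑ q, ∑ u, ∑ u' ∈ Finset.univ.erase u, |P u q - P u' q|)^2 := rfl
end

section
/- Let P be a joint pmf on Z_L × Q (Q finite) and let (U,Q), (V,R) be independent with law P. Define T = U + V (mod L). Then T_L(V | T, Q, R) ≤ (1 + L/2) · T_L(U|Q). -/
open Finset

private lemma ptwise (a a' b b' : ℝ) (ha : 0 ≤ a) (ha' : 0 ≤ a') (hb : 0 ≤ b) (hb' : 0 ≤ b') :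
    |a * b - a' * b'| ≤ |a - a'| * ((b + b') / 2) + ((a + a') / 2) * |b - b'| := by
  calc |a * b - a' * b'|
      = |(a - a') * ((b + b') / 2) + ((a + a') / 2) * (b - b')| := by ring_nf
    _ ≤ |(a - a') * ((b + b') / 2)| + |((a + a') / 2) * (b - b')| := abs_add_le _ _
    _ = |a - a'| * ((b + b') / 2) + ((a + a') / 2) * |b - b'| := by
        rw [abs_mul, abs_mul, abs_of_nonneg (by linarith : (0:ℝ) ≤ (b + b') / 2),
          abs_of_nonneg (by linarith : (0:ℝ) ≤ (a + a') / 2)]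

private lemma reorder5 {α β γ δ ε M : Type*} [Fintype α] [Fintype β] [Fintype γ] [Fintype δ]
    [Fintype ε] [AddCommMonoid M] (f : α → β → γ → δ → ε → M) :
    ∑ a, ∑ b, ∑ c, ∑ d, ∑ e, f a b c d e = ∑ b, ∑ d, ∑ e, ∑ a, ∑ c, f a b c d e :=
  calc ∑ a, ∑ b, ∑ c, ∑ d, ∑ e, f a b c d e
      = ∑ b, ∑ a, ∑ c, ∑ d, ∑ e, f a b c d e := Finset.sum_comm
    _ = ∑ b, ∑ a, ∑ d, ∑ c, ∑ e, f a b c d e :=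
        Finset.sum_congr rfl fun b _ => Finset.sum_congr rfl fun a _ => Finset.sum_comm
    _ = ∑ b, ∑ a, ∑ d, ∑ e, ∑ c, f a b c d e :=
        Finset.sum_congr rfl fun b _ => Finset.sum_congr rfl fun a _ =>
          Finset.sum_congr rfl fun d _ => Finset.sum_comm
    _ = ∑ b, ∑ d, ∑ a, ∑ e, ∑ c, f a b c d e :=
        Finset.sum_congr rfl fun b _ => Finset.sum_comm
    _ = ∑ b, ∑ d, ∑ e, ∑ a, ∑ c, f a b c d e :=
        Finset.sum_congr rfl fun b _ => Finset.sum_congr rfl fun d _ => Finset.sum_comm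

private lemma reorder3 {α β γ M : Type*} [Fintype α] [Fintype β] [Fintype γ]
    [AddCommMonoid M] (f : α → β → γ → M) :
    ∑ a, ∑ b, ∑ c, f a b c = ∑ b, ∑ c, ∑ a, f a b c :=
  calc ∑ a, ∑ b, ∑ c, f a b c
      = ∑ b, ∑ a, ∑ c, f a b c := Finset.sum_comm
    _ = ∑ b, ∑ c, ∑ a, f a b c := Finset.sum_congr rfl fun b _ => Finset.sum_comm

theorem nonbinary_tv_plus_transform_bound
    (L : ℕ) [NeZero L] (hL : 2 ≤ L) {Q : Type*} [Fintype Q]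
    (P : ZMod L → Q → ℝ)
    (hP : ∀ u q, 0 ≤ P u q) (hsum : ∑ u, ∑ q, P u q = 1) :
    (1 / (2 * ((L : ℝ) - 1))) *
        ∑ t, ∑ q, ∑ r, ∑ v, ∑ v' ∈ Finset.univ.erase v,
          |P (t - v) q * P v r - P (t - v') q * P v' r| ≤
      (1 + (L : ℝ) / 2) *
        ((1 / (2 * ((L : ℝ) - 1))) *
          ∑ q, ∑ u, ∑ u' ∈ Finset.univ.erase u, |P u q - P u' q|) := by
  have hErD : ∀ (q : Q) (u : ZMod L),
      ∑ u' ∈ Finset.univ.erase u, |P u q - P u' q| = ∑ u', |P u q - P u' q| :=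
    fun q u => Finset.sum_erase _ (by simp)
  have hErS : ∀ (t : ZMod L) (q r : Q) (v : ZMod L),
      ∑ v' ∈ Finset.univ.erase v, |P (t - v) q * P v r - P (t - v') q * P v' r|
        = ∑ v', |P (t - v) q * P v r - P (t - v') q * P v' r| :=
    fun t q r v => Finset.sum_erase _ (by simp)
  simp only [hErD, hErS]
  set D : ℝ := ∑ q, ∑ u, ∑ u', |P u q - P u' q| with hDdef
  set S : ℝ := ∑ t, ∑ q, ∑ r, ∑ v, ∑ v', |P (t - v) q * P v r - P (t - v') q * P v' r|
    with hSdef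
  -- basic shift reindexings
  have hshiftP : ∀ (q : Q) (v : ZMod L), ∑ t : ZMod L, P (t - v) q = ∑ u, P u q := by
    intro q v
    exact (Fintype.sum_equiv (Equiv.addRight v) (fun u => P u q) (fun t => P (t - v) q)
      (fun u => by simp)).symm
  have hσsum : ∑ q, ∑ u, P u q = 1 := by rw [Finset.sum_comm]; exact hsum
  -- F q d = ∑ u |P u q - P (u+d) q|
  set F : Q → ZMod L → ℝ := fun q d => ∑ u, |P u q - P (u + d) q| with hFdef
  set p : ZMod L → ℝ := fun v => ∑ r, P v r with hpdef
  have hpsum : ∑ v, p v = 1 := hsum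
  have hpshift : ∀ d : ZMod L, ∑ v, p (v - d) = 1 := by
    intro d
    rw [← hpsum]
    exact Fintype.sum_equiv (Equiv.subRight d) (fun v => p (v - d)) p (fun v => rfl)
  -- Term 1 equals D
  have hT1 : (∑ t, ∑ q, ∑ r, ∑ v, ∑ v',
      |P (t - v) q - P (t - v') q| * ((P v r + P v' r) / 2)) = D := by
    rw [reorder5 (fun t q r v v' => |P (t - v) q - P (t - v') q| * ((P v r + P v' r) / 2))]
    have step1 : ∀ (q : Q) (v v' : ZMod L),
        (∑ t : ZMod L, ∑ r, |P (t - v) q - P (t - v') q| * ((P v r + P v' r) / 2))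
          = F q (v - v') * ((p v + p v') / 2) := by
      intro q v v'
      rw [← Finset.sum_mul_sum]
      congr 1
      · rw [hFdef]
        exact (Fintype.sum_equiv (Equiv.addRight v)
          (fun u => |P u q - P (u + (v - v')) q|)
          (fun t => |P (t - v) q - P (t - v') q|)
          (fun u => by
            simp only [Equiv.coe_addRight, add_sub_cancel_right]
            rw [add_sub_assoc])).symm
      · rw [← Finset.sum_div, Finset.sum_add_distrib]
    calc (∑ q, ∑ v, ∑ v', ∑ t : ZMod L, ∑ r,
            |P (t - v) q - P (t - v') q| * ((P v r + P v' r) / 2))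
        = ∑ q, ∑ v, ∑ v' : ZMod L, F q (v - v') * ((p v + p v') / 2) := by
          exact Finset.sum_congr rfl fun q _ => Finset.sum_congr rfl fun v _ =>
            Finset.sum_congr rfl fun v' _ => step1 q v v'
      _ = ∑ q, ∑ v, ∑ d : ZMod L, F q d * ((p v + p (v - d)) / 2) := by
          refine Finset.sum_congr rfl fun q _ => Finset.sum_congr rfl fun v _ => ?_
          exact (Fintype.sum_equiv (Equiv.subLeft v)
            (fun d => F q d * ((p v + p (v - d)) / 2))
            (fun v' => F q (v - v') * ((p v + p v') / 2))
            (fun d => by simp)).symm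
      _ = ∑ q, ∑ d : ZMod L, ∑ v, F q d * ((p v + p (v - d)) / 2) :=
          Finset.sum_congr rfl fun q _ => Finset.sum_comm
      _ = ∑ q, ∑ d : ZMod L, F q d := by
          refine Finset.sum_congr rfl fun q _ => Finset.sum_congr rfl fun d _ => ?_
          rw [← Finset.mul_sum]
          have : ∑ v, (p v + p (v - d)) / 2 = 1 := by
            rw [← Finset.sum_div, Finset.sum_add_distrib, hpsum, hpshift d]
            norm_num
          rw [this, mul_one]
      _ = D := by
          rw [hDdef]
          refine Finset.sum_congr rfl fun q _ => ?_
          rw [Finset.sum_comm]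
          refine Finset.sum_congr rfl fun u _ => ?_
          exact Fintype.sum_equiv (Equiv.addLeft u)
            (fun d => |P u q - P (u + d) q|) (fun u' => |P u q - P u' q|) (fun d => rfl)
  -- Term 2 equals D
  have hT2 : (∑ t, ∑ q, ∑ r, ∑ v, ∑ v',
      ((P (t - v) q + P (t - v') q) / 2) * |P v r - P v' r|) = D := by
    rw [reorder5 (fun t q r v v' => ((P (t - v) q + P (t - v') q) / 2) * |P v r - P v' r|)]
    have step1 : ∀ (q : Q) (v v' : ZMod L),
        (∑ t : ZMod L, ∑ r, ((P (t - v) q + P (t - v') q) / 2) * |P v r - P v' r|)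
          = (∑ u, P u q) * (∑ r, |P v r - P v' r|) := by
      intro q v v'
      rw [← Finset.sum_mul_sum]
      congr 1
      rw [← Finset.sum_div, Finset.sum_add_distrib, hshiftP q v, hshiftP q v']
      ring
    calc (∑ q, ∑ v, ∑ v', ∑ t : ZMod L, ∑ r,
            ((P (t - v) q + P (t - v') q) / 2) * |P v r - P v' r|)
        = ∑ q, ∑ v, ∑ v' : ZMod L, (∑ u, P u q) * (∑ r, |P v r - P v' r|) :=
          Finset.sum_congr rfl fun q _ => Finset.sum_congr rfl fun v _ =>
            Finset.sum_congr rfl fun v' _ => step1 q v v'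
      _ = ∑ q, (∑ u, P u q) * (∑ v, ∑ v' : ZMod L, ∑ r, |P v r - P v' r|) := by
          refine Finset.sum_congr rfl fun q _ => ?_
          rw [Finset.mul_sum]
          refine Finset.sum_congr rfl fun v _ => ?_
          rw [Finset.mul_sum]
      _ = (∑ q, ∑ u, P u q) * (∑ v, ∑ v' : ZMod L, ∑ r, |P v r - P v' r|) :=
          (Finset.sum_mul _ _ _).symm
      _ = ∑ v, ∑ v' : ZMod L, ∑ r, |P v r - P v' r| := by rw [hσsum, one_mul]
      _ = D := by rw [hDdef, reorder3 (fun q u u' => |P u q - P u' q|)]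
  -- main inequality S ≤ 2 D
  have hS2 : S ≤ 2 * D := by
    have hmain : S ≤ (∑ t, ∑ q, ∑ r, ∑ v, ∑ v',
        |P (t - v) q - P (t - v') q| * ((P v r + P v' r) / 2))
      + (∑ t, ∑ q, ∑ r, ∑ v, ∑ v',
        ((P (t - v) q + P (t - v') q) / 2) * |P v r - P v' r|) := by
      rw [hSdef]
      calc (∑ t, ∑ q, ∑ r, ∑ v, ∑ v',
              |P (t - v) q * P v r - P (t - v') q * P v' r|)
          ≤ ∑ t, ∑ q, ∑ r, ∑ v, ∑ v' : ZMod L,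
              (|P (t - v) q - P (t - v') q| * ((P v r + P v' r) / 2)
                + ((P (t - v) q + P (t - v') q) / 2) * |P v r - P v' r|) := by
            refine Finset.sum_le_sum fun t _ => Finset.sum_le_sum fun q _ =>
              Finset.sum_le_sum fun r _ => Finset.sum_le_sum fun v _ =>
              Finset.sum_le_sum fun v' _ => ?_
            exact ptwise _ _ _ _ (hP _ _) (hP _ _) (hP _ _) (hP _ _)
        _ = _ := by simp only [Finset.sum_add_distrib]
    rw [hT1, hT2] at hmain
    linarith
  -- conclude
  have hD0 : 0 ≤ D := by
    rw [hDdef]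
    refine Finset.sum_nonneg fun q _ => Finset.sum_nonneg fun u _ =>
      Finset.sum_nonneg fun u' _ => abs_nonneg _
  have hL2 : (2:ℝ) ≤ (L:ℝ) := by exact_mod_cast hL
  have hc0 : 0 ≤ 1 / (2 * ((L:ℝ) - 1)) := by
    apply div_nonneg zero_le_one
    linarith
  nlinarith [mul_le_mul_of_nonneg_left hS2 hc0, mul_nonneg hc0 hD0]
end
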